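/- For every a > 0, the inequality ∫_{−1}^{0} e^{ay} dy + (1/4)·∫_{−2}^{−1} e^{ay} dy + (9/4)·∫_{−4}^{−2} e^{ay} dy ≤ ∫_{−∞}^{0} e^{ay} dy = 1/a holds. -/

import Mathlib

/-!
Every integral of `exp (a y)` is a difference of values of `exp (a y) / a`, so after multiplying
by `a` and writing `x = exp (-a)` the inequality becomes
`(1 - x) + (x - x²) / 4 + 9 (x² - x⁴) / 4 ≤ 1`. The gap is `x (9x³ - 8x + 3) / 4`, and the cubic
is positive on `[0, ∞)` (its minimum there, at `x = √(8/27)`, is about `0.1`).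
-/

open MeasureTheory

theorem integral_exp_mul_Iio {a : ℝ} (ha : 0 < a) (c : ℝ) :
    ∫ y in Set.Iio c, Real.exp (a * y) = Real.exp (a * c) / a := by
  rw [← integral_Iic_eq_integral_Iio, integral_exp_mul_Iic ha]

theorem intervalIntegral.integral_exp_mul {a : ℝ} (ha : a ≠ 0) (b c : ℝ) :
    ∫ y in b..c, Real.exp (a * y) = (Real.exp (a * c) - Real.exp (a * b)) / a := by
  rw [intervalIntegral.integral_comp_mul_left Real.exp ha, integral_exp, smul_eq_mul,
    inv_mul_eq_div]

theorem nine_mul_cube_sub_eight_mul_add_three_pos {x : ℝ} (hx : 0 ≤ x) :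
    0 < 9 * x ^ 3 - 8 * x + 3 := by
  -- `(x - t)² (9x + 18t)` with `t = 11/20` leaves `(27t² - 8) x + (3 - 18t³)`, both coefficients > 0
  have hsq : 0 ≤ (x - 11 / 20) ^ 2 * (9 * x + 99 / 10) := by positivity
  nlinarith

theorem vase_weighted_sum_le_one {x : ℝ} (hx : 0 ≤ x) :
    (1 - x) + 1 / 4 * (x - x ^ 2) + 9 / 4 * (x ^ 2 - x ^ 4) ≤ 1 := by
  nlinarith [mul_nonneg hx (nine_mul_cube_sub_eight_mul_add_three_pos hx).le]

theorem stmt16 (a : ℝ) (ha : 0 < a) :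
    (∫ y in (-1 : ℝ)..0, Real.exp (a * y)) +
        (1 / 4) * (∫ y in (-2 : ℝ)..(-1), Real.exp (a * y)) +
        (9 / 4) * (∫ y in (-4 : ℝ)..(-2), Real.exp (a * y)) ≤
      ∫ y in Set.Iio (0 : ℝ), Real.exp (a * y) ∧
    (∫ y in Set.Iio (0 : ℝ), Real.exp (a * y)) = 1 / a := by
  have hIio : ∫ y in Set.Iio (0 : ℝ), Real.exp (a * y) = 1 / a := by
    rw [integral_exp_mul_Iio ha, mul_zero, Real.exp_zero]
  refine ⟨?_, hIio⟩
  have hpow (k : ℕ) : Real.exp (a * -k) = Real.exp (-a) ^ k := by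
    rw [← Real.exp_nat_mul]; ring_nf
  have h1 := hpow 1
  have h2 := hpow 2
  have h4 := hpow 4
  push_cast at h1 h2 h4
  simp only [hIio, intervalIntegral.integral_exp_mul ha.ne', mul_zero, Real.exp_zero, h1, h2, h4,
    pow_one]
  calc (1 - Real.exp (-a)) / a + 1 / 4 * ((Real.exp (-a) - Real.exp (-a) ^ 2) / a)
          + 9 / 4 * ((Real.exp (-a) ^ 2 - Real.exp (-a) ^ 4) / a)
      = ((1 - Real.exp (-a)) + 1 / 4 * (Real.exp (-a) - Real.exp (-a) ^ 2)
          + 9 / 4 * (Real.exp (-a) ^ 2 - Real.exp (-a) ^ 4)) / a := by ring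
    _ ≤ 1 / a := by gcongr; exact vase_weighted_sum_le_one (Real.exp_pos _).le
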